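/- Let F : ℝ^d → ℝ be differentiable with L_Ω-Lipschitz gradient, let R : ℝ^d → ℝ be lower semicontinuous and convex, P = F + R, and let U ∈ ℝ^{d×d} be symmetric positive definite. Fix w, v ∈ ℝ^d and define w₊ = prox_R^{U^{-1}}( w − U v ) and w̄₊ = prox_R^{U^{-1}}( w − U ∇F(w) ). Then P(w₊) ≤ P(w) + (w̄₊ − w)ᵀ( L_Ω I − (1/2) U^{-1} )(w̄₊ − w) + (1/2)(w₊ − w)ᵀ( L_Ω I − U^{-1} )(w₊ − w) − (1/2)‖w₊ − w̄₊‖_{U^{-1}}² + ⟨w₊ − w̄₊, ∇F(w) − v⟩. -/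

import Mathlib

open scoped BigOperators RealInnerProductSpace

/-- `ℝ^d` as Euclidean space. -/
abbrev Euc (d : ℕ) := EuclideanSpace ℝ (Fin d)

/-- Action of a `d × d` real matrix on a vector of `ℝ^d`. -/
noncomputable def mdot {d : ℕ} (M : Matrix (Fin d) (Fin d) ℝ) (x : Euc d) : Euc d :=
  Matrix.toEuclideanLin M x

/-- The quadratic form `‖x‖_M² = xᵀ M x` associated with a matrix `M`. -/
noncomputable def qf {d : ℕ} (M : Matrix (Fin d) (Fin d) ℝ) (x : Euc d) : ℝ :=
  ⟪x, mdot M x⟫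

/-- `u` is a point of the scaled proximal operator `prox_R^M (w)`, i.e. a minimizer of
`y ↦ (1/2)‖y - w‖_M² + R y`, for a real-valued `R`. -/
def IsProxR {d : ℕ} (R : Euc d → ℝ) (M : Matrix (Fin d) (Fin d) ℝ) (w u : Euc d) : Prop :=
  ∀ y, 2⁻¹ * qf M (u - w) + R u ≤ 2⁻¹ * qf M (y - w) + R y

/-! The descent lemma bounds `F w₊` by the linearisation of `F` at `w` plus `(L/2)‖w₊ − w‖²`.
For the convex part, comparing a proximal point `u` of `z` with the points of the segment
from `u` to an arbitrary `y` gives the three-point inequality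
`½‖u − z‖² + R u + ½‖y − u‖² ≤ ½‖y − z‖² + R y` in the metric of `U⁻¹`. Applying it to `w̄₊`
with `y = w` and to `w₊` with `y = w̄₊`, and adding the descent lemma, gives the claim up to
the term `L‖w̄₊ − w‖²`, which is nonnegative. -/

open Set Filter Topology

theorem QuadraticMap.map_add_smul {K E : Type*} [CommRing K] [AddCommGroup E] [Module K E]
    (Q : QuadraticForm K E) (a c : E) (t : K) :
    Q (a + t • c) = Q a + t * polar Q a c + t ^ 2 * Q c := by
  rw [QuadraticMap.map_add (⇑Q), QuadraticMap.map_smul, polar_smul_right, smul_eq_mul,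
    smul_eq_mul]
  ring

section Prox

variable {E : Type*} [AddCommGroup E] [Module ℝ E] {R : E → ℝ} (Q : QuadraticForm ℝ E)
  {z u : E}

-- Compare `u` with `u + t • (y - u)` and let `t → 0⁺`.
theorem ConvexOn.le_add_half_polar_of_forall_le (hR : ConvexOn ℝ univ R)
    (hu : ∀ y, 2⁻¹ * Q (u - z) + R u ≤ 2⁻¹ * Q (y - z) + R y) (y : E) :
    R u ≤ R y + 2⁻¹ * QuadraticMap.polar Q (u - z) (y - u) := by
  set p := QuadraticMap.polar Q (u - z) (y - u)
  have hstep : ∀ t ∈ Ioc (0 : ℝ) 1, R u ≤ R y + 2⁻¹ * p + 2⁻¹ * Q (y - u) * t := by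
    rintro t ⟨ht0, ht1⟩
    have hmin := hu (u + t • (y - u))
    have hconv : R (u + t • (y - u)) ≤ (1 - t) * R u + t * R y := by
      have := hR.2 (mem_univ u) (mem_univ y) (sub_nonneg.2 ht1) ht0.le (sub_add_cancel 1 t)
      rwa [show (1 - t) • u + t • y = u + t • (y - u) by module] at this
    rw [show u + t • (y - u) - z = (u - z) + t • (y - u) by abel, Q.map_add_smul] at hmin
    have : t * R u ≤ t * (R y + 2⁻¹ * p + 2⁻¹ * Q (y - u) * t) := by nlinarith
    exact le_of_mul_le_mul_left this ht0
  have hlim : Tendsto (fun t : ℝ => R y + 2⁻¹ * p + 2⁻¹ * Q (y - u) * t) (𝓝[>] 0)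
      (𝓝 (R y + 2⁻¹ * p)) := by
    refine tendsto_nhdsWithin_of_tendsto_nhds (Continuous.tendsto' ?_ 0 _ (by simp))
    fun_prop
  exact ge_of_tendsto hlim (eventually_of_mem (Ioc_mem_nhdsGT one_pos) hstep)

theorem ConvexOn.prox_three_point (hR : ConvexOn ℝ univ R)
    (hu : ∀ y, 2⁻¹ * Q (u - z) + R u ≤ 2⁻¹ * Q (y - z) + R y) (y : E) :
    2⁻¹ * Q (u - z) + R u + 2⁻¹ * Q (y - u) ≤ 2⁻¹ * Q (y - z) + R y := by
  have := hR.le_add_half_polar_of_forall_le Q hu y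
  rw [show y - z = (u - z) + (y - u) by abel, QuadraticMap.map_add (⇑Q)]
  linarith

end Prox

theorem le_add_inner_add_of_lipschitz_gradient {E : Type*} [NormedAddCommGroup E]
    [InnerProductSpace ℝ E] [CompleteSpace E] {F : E → ℝ} {gF : E → E} {L : ℝ}
    (hF : ∀ x, HasGradientAt F (gF x) x) (hLip : ∀ x y, ‖gF x - gF y‖ ≤ L * ‖x - y‖)
    (x y : E) :
    F y ≤ F x + ⟪gF x, y - x⟫ + L / 2 * ‖y - x‖ ^ 2 := by
  let c : ℝ → E := fun t => x + t • (y - x)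
  let B : ℝ → ℝ := fun t => F x + t * ⟪gF x, y - x⟫ + L / 2 * ‖y - x‖ ^ 2 * t ^ 2
  have hc : ∀ t, HasDerivAt c (y - x) t := fun t =>
    (((hasDerivAt_id t).smul_const (y - x)).const_add x).congr_deriv (one_smul _ _)
  have hFc : ∀ t, HasDerivAt (F ∘ c) ⟪gF (c t), y - x⟫ t := fun t => by
    simpa using (hF (c t)).hasFDerivAt.comp_hasDerivAt t (hc t)
  have hB : ∀ t, HasDerivAt B (⟪gF x, y - x⟫ + L * ‖y - x‖ ^ 2 * t) t := fun t => by
    refine ((((hasDerivAt_id t).mul_const ⟪gF x, y - x⟫).const_add (F x)).add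
      ((hasDerivAt_pow 2 t).const_mul (L / 2 * ‖y - x‖ ^ 2))).congr_deriv ?_
    simp only [one_mul]; ring
  have hslope : ∀ t ∈ Ico (0 : ℝ) 1,
      ⟪gF (c t), y - x⟫ ≤ ⟪gF x, y - x⟫ + L * ‖y - x‖ ^ 2 * t := by
    rintro t ⟨ht0, -⟩
    calc ⟪gF (c t), y - x⟫ = ⟪gF x, y - x⟫ + ⟪gF (c t) - gF x, y - x⟫ := by
          rw [inner_sub_left]; ring
      _ ≤ ⟪gF x, y - x⟫ + ‖gF (c t) - gF x‖ * ‖y - x‖ := by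
          gcongr; exact real_inner_le_norm _ _
      _ ≤ ⟪gF x, y - x⟫ + L * ‖c t - x‖ * ‖y - x‖ := by gcongr; exact hLip _ _
      _ = ⟪gF x, y - x⟫ + L * ‖y - x‖ ^ 2 * t := by
          simp only [c, add_sub_cancel_left, norm_smul, Real.norm_of_nonneg ht0]; ring
  have := image_le_of_deriv_right_le_deriv_boundary
    (fun t _ => (hFc t).continuousAt.continuousWithinAt) (fun t _ => (hFc t).hasDerivWithinAt)
    (by simp [c, B]) (fun t _ => (hB t).continuousAt.continuousWithinAt)
    (fun t _ => (hB t).hasDerivWithinAt) hslope (right_mem_Icc.2 zero_le_one)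
  simpa [c, B] using this

section Euclidean

variable {d : ℕ}

theorem mdot_mdot (M N : Matrix (Fin d) (Fin d) ℝ) (x : Euc d) :
    mdot M (mdot N x) = mdot (M * N) x := by
  simp [mdot]

theorem mdot_one (x : Euc d) : mdot 1 x = x := by
  simp [mdot, Matrix.toLpLin_one]

theorem inner_mdot_left {M : Matrix (Fin d) (Fin d) ℝ} (hM : M.IsHermitian) (x y : Euc d) :
    ⟪mdot M x, y⟫ = ⟪x, mdot M y⟫ :=
  Matrix.isSymmetric_toEuclideanLin_iff.2 hM x y

theorem qf_add (M : Matrix (Fin d) (Fin d) ℝ) (a c : Euc d) :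
    qf M (a + c) = qf M a + (⟪a, mdot M c⟫ + ⟪c, mdot M a⟫) + qf M c := by
  simp only [qf, mdot, map_add, inner_add_left, inner_add_right]
  ring

theorem qf_sub_comm (M : Matrix (Fin d) (Fin d) ℝ) (a b : Euc d) :
    qf M (a - b) = qf M (b - a) := by
  simp only [qf, mdot, ← neg_sub b a, map_neg, inner_neg_left, inner_neg_right, neg_neg]

theorem qf_zero (M : Matrix (Fin d) (Fin d) ℝ) : qf M 0 = 0 := by
  simp [qf]

theorem qf_one (x : Euc d) : qf 1 x = ‖x‖ ^ 2 := by
  rw [qf, mdot_one, real_inner_self_eq_norm_sq]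

theorem qf_sub (M N : Matrix (Fin d) (Fin d) ℝ) (x : Euc d) :
    qf (M - N) x = qf M x - qf N x := by
  simp [qf, mdot, inner_sub_right]

theorem qf_smul (c : ℝ) (M : Matrix (Fin d) (Fin d) ℝ) (x : Euc d) :
    qf (c • M) x = c * qf M x := by
  simp [qf, mdot, real_inner_smul_right]

theorem qf_inv_add_mdot {U : Matrix (Fin d) (Fin d) ℝ} (hU : U.IsHermitian) (hdet : IsUnit U.det)
    (a v : Euc d) :
    qf U⁻¹ (a + mdot U v) = qf U⁻¹ a + 2 * ⟪a, v⟫ + qf U v := by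
  have hinv : ∀ x, mdot U⁻¹ (mdot U x) = x := fun x => by
    rw [mdot_mdot, Matrix.nonsing_inv_mul U hdet, mdot_one]
  have hinv' : ∀ x, mdot U (mdot U⁻¹ x) = x := fun x => by
    rw [mdot_mdot, Matrix.mul_nonsing_inv U hdet, mdot_one]
  have hcross : ⟪mdot U v, mdot U⁻¹ a⟫ = ⟪a, v⟫ := by
    rw [inner_mdot_left hU, hinv', real_inner_comm]
  have hlast : qf U⁻¹ (mdot U v) = qf U v := by
    rw [qf, hinv, qf, real_inner_comm]
  rw [qf_add, hinv, hcross, hlast]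
  ring

theorem IsProxR.three_point {R : Euc d → ℝ} (hR : ConvexOn ℝ univ R)
    {M : Matrix (Fin d) (Fin d) ℝ} {z u : Euc d} (hu : IsProxR R M z u) (y : Euc d) :
    2⁻¹ * qf M (u - z) + R u + 2⁻¹ * qf M (y - u) ≤ 2⁻¹ * qf M (y - z) + R y :=
  hR.prox_three_point
    (LinearMap.BilinMap.toQuadraticMap ((innerₗ (Euc d)).compl₂ (Matrix.toEuclideanLin M))) hu y

theorem IsProxR.gradient_step_le {R : Euc d → ℝ} (hR : ConvexOn ℝ univ R)
    {U : Matrix (Fin d) (Fin d) ℝ} (hU : U.IsHermitian) (hdet : IsUnit U.det) {w v u : Euc d}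
    (hu : IsProxR R U⁻¹ (w - mdot U v) u) (y : Euc d) :
    R u + ⟪u - y, v⟫ + 2⁻¹ * qf U⁻¹ (u - w) + 2⁻¹ * qf U⁻¹ (y - u)
      ≤ R y + 2⁻¹ * qf U⁻¹ (y - w) := by
  have h := hu.three_point hR y
  rw [show u - (w - mdot U v) = (u - w) + mdot U v by abel,
    show y - (w - mdot U v) = (y - w) + mdot U v by abel,
    qf_inv_add_mdot hU hdet, qf_inv_add_mdot hU hdet] at h
  simp only [inner_sub_left] at h ⊢
  linarith

end Euclidean

theorem vm_prox_stochastic_descent_general {d : ℕ} (F : Euc d → ℝ) (gF : Euc d → Euc d)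
    (hF : ∀ x, HasGradientAt F (gF x) x)
    (LΩ : ℝ) (hLip : ∀ x y, ‖gF x - gF y‖ ≤ LΩ * ‖x - y‖)
    (R : Euc d → ℝ) (hconv : ConvexOn ℝ Set.univ R)
    (U : Matrix (Fin d) (Fin d) ℝ) (hU : U.PosDef) (w v wp wbar : Euc d)
    (hwp : IsProxR R U⁻¹ (w - mdot U v) wp)
    (hwbar : IsProxR R U⁻¹ (w - mdot U (gF w)) wbar) :
    F wp + R wp ≤ F w + R w
      + qf (LΩ • (1 : Matrix (Fin d) (Fin d) ℝ) - (2⁻¹ : ℝ) • U⁻¹) (wbar - w)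
      + 2⁻¹ * qf (LΩ • (1 : Matrix (Fin d) (Fin d) ℝ) - U⁻¹) (wp - w)
      - 2⁻¹ * qf U⁻¹ (wp - wbar)
      + ⟪wp - wbar, gF w - v⟫ := by
  have hdet : IsUnit U.det := (Matrix.isUnit_iff_isUnit_det U).1 hU.isUnit
  have hdescent := le_add_inner_add_of_lipschitz_gradient hF hLip w wp
  have hbar := hwbar.gradient_step_le hconv hU.isHermitian hdet w
  have hplus := hwp.gradient_step_le hconv hU.isHermitian hdet wbar
  have hL : 0 ≤ LΩ * ‖wbar - w‖ ^ 2 := by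
    have := mul_nonneg ((norm_nonneg _).trans (hLip wbar w)) (norm_nonneg (wbar - w))
    rwa [mul_assoc, ← sq] at this
  rw [sub_self, qf_zero, qf_sub_comm _ w] at hbar
  rw [qf_sub_comm _ wbar] at hplus
  rw [real_inner_comm, inner_sub_left] at hdescent
  simp only [qf_sub, qf_smul, qf_one, inner_sub_left, inner_sub_right] at hbar hplus ⊢
  linarith

/-- for `F` differentiable with `L_Ω`-Lipschitz gradient, `R` lsc convex,
`P = F + R`, `U` symmetric positive definite, `w₊ = prox_R^{U⁻¹}(w − Uv)` and
`w̄₊ = prox_R^{U⁻¹}(w − U∇F(w))`: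
`P(w₊) ≤ P(w) + (w̄₊ − w)ᵀ(L_Ω I − (1/2)U⁻¹)(w̄₊ − w) + (1/2)(w₊ − w)ᵀ(L_Ω I − U⁻¹)(w₊ − w)
 − (1/2)‖w₊ − w̄₊‖_{U⁻¹}² + ⟨w₊ − w̄₊, ∇F(w) − v⟩`. -/
theorem vm_prox_stochastic_descent {d : ℕ} (F : Euc d → ℝ) (gF : Euc d → Euc d)
    (hF : ∀ x, HasGradientAt F (gF x) x)
    (LΩ : ℝ) (hLip : ∀ x y, ‖gF x - gF y‖ ≤ LΩ * ‖x - y‖)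
    (R : Euc d → ℝ) (hlsc : LowerSemicontinuous R) (hconv : ConvexOn ℝ Set.univ R)
    (U : Matrix (Fin d) (Fin d) ℝ) (hU : U.PosDef) (w v wp wbar : Euc d)
    (hwp : IsProxR R U⁻¹ (w - mdot U v) wp)
    (hwbar : IsProxR R U⁻¹ (w - mdot U (gF w)) wbar) :
    F wp + R wp ≤ F w + R w
      + qf (LΩ • (1 : Matrix (Fin d) (Fin d) ℝ) - (2⁻¹ : ℝ) • U⁻¹) (wbar - w)
      + 2⁻¹ * qf (LΩ • (1 : Matrix (Fin d) (Fin d) ℝ) - U⁻¹) (wp - w)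
      - 2⁻¹ * qf U⁻¹ (wp - wbar)
      + ⟪wp - wbar, gF w - v⟫ :=
  vm_prox_stochastic_descent_general F gF hF LΩ hLip R hconv U hU w v wp wbar hwp hwbar
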